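/- Let H and K be real Hilbert spaces and T : H →L[ℝ] K a bounded linear operator with ‖T‖ ≤ 1. Let β > 0, w₀ ∈ H, and h₀ = (T*T)^{β/2} w₀, where the fractional power of T*T is defined via the continuous functional calculus. For λ > 0 define h_{*,0} = 0 and h_{*,t} = (T*T + λ·id)⁻¹ (T*T h₀ + λ h_{*,t−1}) for integers t ≥ 1. Then for every t ≥ 1, ‖T(h_{*,t} − h₀)‖² ≤ ‖w₀‖² · λ^{min(β + 1, 2t)}. -/

import Mathlib

open ContinuousLinearMap
open scoped InnerProductSpace

/-!
With `A = T*T`, the recursion gives `(A + λ)(h₀ - h_{*,t+1}) = λ (h₀ - h_{*,t})`, so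
`h₀ - h_{*,t} = r(A)^t h₀ = (r^t · x^{β/2})(A) w₀` with `r(x) = λ / (x + λ)`. Hence
`‖T(h_{*,t} - h₀)‖² = ⟪g(A) w₀, w₀⟫` for `g(x) = x^{β+1} r(x)^{2t}`. On `σ(A) ⊆ [0, 1]`, with
`m = min (β + 1) (2t)`, one has `g(x) ≤ x^m r(x)^m = (λx / (x + λ))^m ≤ λ^m`, and monotonicity of
the functional calculus turns this into `g(A) ≤ λ^m`.
-/

namespace Real

theorem rpow_mul_div_add_rpow_le_rpow_min {x s r lam : ℝ} (hx₀ : 0 ≤ x) (hx₁ : x ≤ 1)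
    (hs : 0 ≤ s) (hr : 0 ≤ r) (hlam : 0 < lam) :
    x ^ s * (lam / (x + lam)) ^ r ≤ lam ^ min s r := by
  set u := lam / (x + lam)
  have hu₀ : 0 ≤ u := by positivity
  have hu₁ : u ≤ 1 := div_le_one_of_le₀ (by linarith) (by positivity)
  have hxu : x * u ≤ lam := by
    rw [mul_div_assoc', div_le_iff₀ (by positivity)]
    nlinarith
  have hm : 0 ≤ min s r := le_min hs hr
  calc x ^ s * u ^ r ≤ x ^ min s r * u ^ min s r :=
        mul_le_mul (rpow_le_rpow_of_exponent_ge' hx₀ hx₁ hm (min_le_left _ _))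
          (rpow_le_rpow_of_exponent_ge' hu₀ hu₁ hm (min_le_right _ _)) (by positivity)
          (by positivity)
    _ = (x * u) ^ min s r := (mul_rpow hx₀ hu₀).symm
    _ ≤ lam ^ min s r := rpow_le_rpow (by positivity) hxu hm

theorem mul_pow_mul_rpow_half_sq {x β u : ℝ} (hx : 0 ≤ x) (hβ : β + 1 ≠ 0) (t : ℕ) :
    x * (u ^ t * x ^ (β / 2)) ^ 2 = x ^ (β + 1) * u ^ (2 * (t : ℝ)) := by
  have hsq : (x ^ (β / 2)) ^ 2 = x ^ β := by
    rw [← rpow_natCast, ← rpow_mul hx]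
    norm_num
  rw [rpow_add' hx hβ, rpow_one, mul_pow, hsq,
    show 2 * (t : ℝ) = ((2 * t : ℕ) : ℝ) by push_cast; rfl, rpow_natCast, pow_mul']
  ring

end Real

theorem continuousOn_div_add_const {lam : ℝ} (c : ℝ) {s : Set ℝ} (hlam : -lam ∉ s) :
    ContinuousOn (fun x => c / (x + lam)) s :=
  continuousOn_const.div (continuousOn_id.add continuousOn_const) fun x hx h =>
    hlam (by rwa [← eq_neg_of_add_eq_zero_left h])

theorem continuousOn_inv_add_const {lam : ℝ} {s : Set ℝ} (hlam : -lam ∉ s) :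
    ContinuousOn (fun x => (x + lam)⁻¹) s := by
  simpa only [one_div] using continuousOn_div_add_const 1 hlam

section

variable {H : Type*} [NormedAddCommGroup H] [InnerProductSpace ℝ H] [CompleteSpace H]
  [ContinuousFunctionalCalculus ℝ (H →L[ℝ] H) IsSelfAdjoint]
  {A : H →L[ℝ] H} {lam : ℝ}

theorem inner_cfc_apply_le_mul_norm_sq {f : ℝ → ℝ} {c : ℝ} (hA : IsSelfAdjoint A)
    (hf : ContinuousOn f (spectrum ℝ A)) (hfc : ∀ x ∈ spectrum ℝ A, f x ≤ c) (w : H) :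
    ⟪cfc f A w, w⟫_ℝ ≤ c * ‖w‖ ^ 2 := by
  let _ := instStarOrderedRingRCLike (𝕜 := ℝ) (H := H)
  have hpos := (le_def _ _).mp (cfc_le_algebraMap f c A hfc hf hA)
  have := hpos.inner_nonneg_left w
  rw [sub_apply, Algebra.algebraMap_eq_smul_one, smul_apply, one_apply_eq_self, inner_sub_left,
    real_inner_smul_left, real_inner_self_eq_norm_sq] at this
  linarith

theorem inner_apply_cfc_apply_cfc {f : ℝ → ℝ} (hA : IsSelfAdjoint A)
    (hf : ContinuousOn f (spectrum ℝ A)) (w : H) :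
    ⟪A (cfc f A w), cfc f A w⟫_ℝ = ⟪cfc (fun x => x * f x ^ 2) A w, w⟫_ℝ := by
  have hmul : cfc (fun x => x * f x ^ 2) A = cfc f A * (A * cfc f A) := by
    conv_rhs => enter [2, 1]; rw [← cfc_id' ℝ A]
    rw [← cfc_mul _ _ A, ← cfc_mul _ _ A]
    exact cfc_congr fun x _ => by ring
  rw [hmul, mul_apply_eq_comp, mul_apply_eq_comp]
  exact ((cfc_predicate f A).isSymmetric _ _).symm

theorem cfc_inv_add_const_apply_add_smul (hA : IsSelfAdjoint A)
    (hlam : -lam ∉ spectrum ℝ A) (v : H) :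
    cfc (fun x => (x + lam)⁻¹) A ((A + lam • ContinuousLinearMap.id ℝ H) v) = v := by
  have hne : ∀ x ∈ spectrum ℝ A, x + lam ≠ 0 := fun x hx h =>
    hlam (by rwa [← eq_neg_of_add_eq_zero_left h])
  have hadd : A + lam • ContinuousLinearMap.id ℝ H = cfc (fun x => x + lam) A := by
    rw [cfc_add_const lam _ A, cfc_id' ℝ A, Algebra.algebraMap_eq_smul_one]
    rfl
  rw [hadd, ← mul_apply_eq_comp, ← cfc_mul _ _ A (continuousOn_inv_add_const hlam),
    cfc_congr (g := fun _ => 1) fun x hx => inv_mul_cancel₀ (hne x hx), cfc_const_one ℝ A,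
    one_apply_eq_self]

theorem tikhonov_residual_succ (hA : IsSelfAdjoint A) (hlam : -lam ∉ spectrum ℝ A)
    {h₀ h h' : H} (hrec : (A + lam • ContinuousLinearMap.id ℝ H) h' = A h₀ + lam • h) :
    h₀ - h' = cfc (fun x => lam / (x + lam)) A (h₀ - h) := by
  have hres : (A + lam • ContinuousLinearMap.id ℝ H) (h₀ - h') = lam • (h₀ - h) := by
    rw [map_sub, hrec, add_apply, smul_apply, ContinuousLinearMap.id_apply, smul_sub]
    abel
  simp_rw [div_eq_mul_inv]
  rw [← cfc_inv_add_const_apply_add_smul hA hlam (h₀ - h'), hres, map_smul,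
    cfc_const_mul lam _ A (continuousOn_inv_add_const hlam), smul_apply]

theorem tikhonov_residual_eq_cfc (hA : IsSelfAdjoint A) (hlam : -lam ∉ spectrum ℝ A)
    {h₀ : H} {hs : ℕ → H} (h0 : hs 0 = 0)
    (hrec : ∀ t : ℕ, (A + lam • ContinuousLinearMap.id ℝ H) (hs (t + 1)) = A h₀ + lam • hs t)
    (t : ℕ) : h₀ - hs t = cfc (fun x => (lam / (x + lam)) ^ t) A h₀ := by
  rw [cfc_pow _ t A (continuousOn_div_add_const lam hlam)]
  induction t with
  | zero => rw [h0, sub_zero, pow_zero, one_apply_eq_self]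
  | succ t ih => rw [tikhonov_residual_succ hA hlam (hrec t), ih, pow_succ', mul_apply_eq_comp]

end

theorem spectrum_adjoint_comp_self_subset_Icc {H K : Type*} [NormedAddCommGroup H]
    [InnerProductSpace ℝ H] [CompleteSpace H] [NormedAddCommGroup K] [InnerProductSpace ℝ K]
    [CompleteSpace K] (T : H →L[ℝ] K) :
    spectrum ℝ (adjoint T ∘L T) ⊆ Set.Icc 0 (‖T‖ ^ 2) := by
  rcases subsingleton_or_nontrivial H with _ | _
  · simp [spectrum.of_subsingleton]
  intro x hx
  exact ⟨SpectrumRestricts.nnreal_iff.mp (isPositive_adjoint_comp_self T).spectrumRestricts x hx,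
    (le_abs_self x).trans <| (spectrum.norm_le_norm_of_mem hx).trans
      (by rw [norm_adjoint_comp_self, sq])⟩

/-- Weak-metric iterated Tikhonov regularization bias bound under the β-source condition:
with `‖T‖ ≤ 1`, `h₀ = (T*T)^(β/2) w₀` (fractional power via the continuous functional
calculus), `h_{*,0} = 0` and `(T*T + λ·id) h_{*,t} = T*T h₀ + λ h_{*,t−1}` for `t ≥ 1`,
one has `‖T(h_{*,t} − h₀)‖² ≤ ‖w₀‖² λ^(min (β+1) (2t))` for every `t ≥ 1`. -/
theorem iterated_tikhonov_bias_weak_metric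
    {H K : Type*} [NormedAddCommGroup H] [InnerProductSpace ℝ H] [CompleteSpace H]
    [NormedAddCommGroup K] [InnerProductSpace ℝ K] [CompleteSpace K]
    [ContinuousFunctionalCalculus ℝ (H →L[ℝ] H) IsSelfAdjoint]
    (T : H →L[ℝ] K) (hT : ‖T‖ ≤ 1)
    (β : ℝ) (hβ : 0 < β) (w₀ h₀ : H)
    (hsource : h₀ = cfc (fun x : ℝ => x ^ (β / 2)) (adjoint T ∘L T) w₀)
    (lam : ℝ) (hlam : 0 < lam)
    (hs : ℕ → H) (h0 : hs 0 = 0)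
    (hrec : ∀ t : ℕ, (adjoint T ∘L T + lam • ContinuousLinearMap.id ℝ H) (hs (t + 1))
      = (adjoint T ∘L T) h₀ + lam • hs t) :
    ∀ t : ℕ, 1 ≤ t → ‖T (hs t - h₀)‖ ^ 2 ≤ ‖w₀‖ ^ 2 * lam ^ min (β + 1) (2 * (t : ℝ)) := by
  intro t _
  set A := adjoint T ∘L T
  have hA : IsSelfAdjoint A := (isPositive_adjoint_comp_self T).isSelfAdjoint
  have hσ : ∀ x ∈ spectrum ℝ A, 0 ≤ x ∧ x ≤ 1 := fun x hx =>
    have hx' := spectrum_adjoint_comp_self_subset_Icc T hx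
    ⟨hx'.1, hx'.2.trans (pow_le_one₀ (norm_nonneg T) hT)⟩
  have hlam' : -lam ∉ spectrum ℝ A := fun h => by linarith [(hσ _ h).1]
  set f := fun x : ℝ => (lam / (x + lam)) ^ t * x ^ (β / 2)
  have hR : ContinuousOn (fun x => (lam / (x + lam)) ^ t) (spectrum ℝ A) :=
    (continuousOn_div_add_const lam hlam').pow t
  have hsrc : ContinuousOn (fun x : ℝ => x ^ (β / 2)) (spectrum ℝ A) :=
    (Real.continuous_rpow_const (by positivity)).continuousOn
  have hf : ContinuousOn f (spectrum ℝ A) := hR.mul hsrc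
  have herr : h₀ - hs t = cfc f A w₀ := by
    rw [tikhonov_residual_eq_cfc hA hlam' h0 hrec, hsource, ← mul_apply_eq_comp,
      ← cfc_mul _ _ A hR hsrc]
  rw [← neg_sub, map_neg, norm_neg, herr, apply_norm_sq_eq_inner_adjoint_left, RCLike.re_to_real,
    inner_apply_cfc_apply_cfc hA hf, mul_comm]
  refine inner_cfc_apply_le_mul_norm_sq hA (continuousOn_id.mul (hf.pow 2)) (fun x hx => ?_) w₀
  obtain ⟨hx₀, hx₁⟩ := hσ x hx
  exact (Real.mul_pow_mul_rpow_half_sq hx₀ (by positivity) t).trans_le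
    (Real.rpow_mul_div_add_rpow_le_rpow_min hx₀ hx₁ (by positivity) (by positivity) hlam)
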